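/- arXiv:1311.3742 — 2 statements merged into one kernel-verified Lean document; each statement's English description precedes it below -/
import Mathlib

section
/- Let q ≥ 2 and define G_q : ℝ^d → ℝ by G_q(A) = (1/q)(1 + |A|²)^{q/2}. Then there exists a constant c_q > 0, depending only on q and d, such that for all A, B ∈ ℝ^d one has (∇G_q(A) − ∇G_q(B)) · (A − B) ≥ c_q (1 + |A|² + |B|²)^{(q−2)/2} |A − B|². -/
/-!
Writing `α = (1+|A|²)^s`, `β = (1+|B|²)^s` with `s = (q-2)/2`, polarization gives
`(αA - βB)·(A - B) = (α+β)/2 |A-B|² + (α-β)(|A|²-|B|²)/2`, and the last term is nonnegative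
because the weight increases with the norm. Finally `1+|A|²+|B|² ≤ 2 max(1+|A|², 1+|B|²)`,
so `(1+|A|²+|B|²)^s ≤ 2^s (α+β)`, which gives the claim with `c_q = 2^(-s)/2`.
-/

open RealInnerProductSpace

theorem Real.add_rpow_le_two_rpow_mul_rpow_add_rpow {a b p : ℝ} (ha : 0 ≤ a) (hb : 0 ≤ b)
    (hp : 0 ≤ p) : (a + b) ^ p ≤ 2 ^ p * (a ^ p + b ^ p) := calc
  (a + b) ^ p ≤ (2 * max a b) ^ p := by
    rw [two_mul]; gcongr <;> first | positivity | simp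
  _ = 2 ^ p * (max a b) ^ p := Real.mul_rpow zero_le_two (le_max_of_le_left ha)
  _ = 2 ^ p * max (a ^ p) (b ^ p) := by rw [Real.rpow_max ha hb hp]
  _ ≤ 2 ^ p * (a ^ p + b ^ p) := by
    gcongr; exact max_le_add_of_nonneg (by positivity) (by positivity)

section InnerProductSpace

variable {E : Type*} [NormedAddCommGroup E] [InnerProductSpace ℝ E]

theorem real_inner_smul_sub_smul_sub (a b : ℝ) (x y : E) :
    ⟪a • x - b • y, x - y⟫ = (a + b) / 2 * ‖x - y‖ ^ 2 + (a - b) * (‖x‖ ^ 2 - ‖y‖ ^ 2) / 2 := by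
  simp only [norm_sub_sq_real, inner_sub_left, inner_sub_right, real_inner_smul_left,
    real_inner_self_eq_norm_sq, real_inner_comm x y]
  ring

theorem Monovary.mul_norm_sub_sq_le_inner_smul_sub_smul {w : E → ℝ}
    (hw : Monovary w fun x ↦ ‖x‖ ^ 2) (x y : E) :
    (w x + w y) / 2 * ‖x - y‖ ^ 2 ≤ ⟪w x • x - w y • y, x - y⟫ := by
  rw [real_inner_smul_sub_smul_sub]
  have := hw.sub_mul_sub_nonneg y x
  linarith

end InnerProductSpace

theorem monovary_one_add_sq_norm_rpow {E : Type*} [SeminormedAddCommGroup E] {s : ℝ}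
    (hs : 0 ≤ s) : Monovary (fun x : E ↦ (1 + ‖x‖ ^ 2) ^ s) fun x ↦ ‖x‖ ^ 2 :=
  fun _ _ h ↦ Real.rpow_le_rpow (by positivity) (by linarith) hs

theorem two_rpow_neg_div_two_mul_one_add_add_rpow_le {s t u : ℝ} (hs : 0 ≤ s) (ht : 0 ≤ t)
    (hu : 0 ≤ u) : 2 ^ (-s) / 2 * (1 + t + u) ^ s ≤ ((1 + t) ^ s + (1 + u) ^ s) / 2 := by
  have h2s : (2 : ℝ) ^ (-s) * 2 ^ s = 1 := by
    rw [← Real.rpow_add zero_lt_two, neg_add_cancel, Real.rpow_zero]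
  have hle : (1 + t + u) ^ s ≤ 2 ^ s * ((1 + t) ^ s + (1 + u) ^ s) := calc
    (1 + t + u) ^ s ≤ ((1 + t) + (1 + u)) ^ s := by gcongr; linarith
    _ ≤ _ := Real.add_rpow_le_two_rpow_mul_rpow_add_rpow (by linarith) (by linarith) hs
  calc 2 ^ (-s) / 2 * (1 + t + u) ^ s
      ≤ 2 ^ (-s) / 2 * (2 ^ s * ((1 + t) ^ s + (1 + u) ^ s)) := by gcongr
    _ = ((1 + t) ^ s + (1 + u) ^ s) / 2 := by
      rw [← mul_assoc, div_mul_eq_mul_div, h2s]; ring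

/-- Strong monotonicity of the gradient of `G_q(A) = (1/q)(1+|A|²)^{q/2}`:
there is `c_q > 0` with
`(∇G_q(A) − ∇G_q(B)) · (A − B) ≥ c_q (1+|A|²+|B|²)^{(q−2)/2} |A−B|²`. -/
theorem gradient_Gq_strong_monotonicity (d : ℕ) (q : ℝ) (hq : 2 ≤ q) :
    ∃ c : ℝ, 0 < c ∧ ∀ A B : EuclideanSpace ℝ (Fin d),
      c * (1 + ‖A‖ ^ 2 + ‖B‖ ^ 2) ^ ((q - 2) / 2) * ‖A - B‖ ^ 2 ≤
        (inner ℝ ((1 + ‖A‖ ^ 2) ^ ((q - 2) / 2) • A - (1 + ‖B‖ ^ 2) ^ ((q - 2) / 2) • B)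
          (A - B) : ℝ) := by
  have hs : 0 ≤ (q - 2) / 2 := by linarith
  refine ⟨2 ^ (-((q - 2) / 2)) / 2, by positivity, fun A B ↦ ?_⟩
  calc _ ≤ ((1 + ‖A‖ ^ 2) ^ ((q - 2) / 2) + (1 + ‖B‖ ^ 2) ^ ((q - 2) / 2)) / 2 * ‖A - B‖ ^ 2 := by
        gcongr
        exact two_rpow_neg_div_two_mul_one_add_add_rpow_le hs (by positivity) (by positivity)
    _ ≤ _ := (monovary_one_add_sq_norm_rpow hs).mul_norm_sub_sq_le_inner_smul_sub_smul A B
end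

section
/- Let q ≥ 2 and G_q(A) = (1/q)(1 + |A|²)^{q/2} for A ∈ ℝ^d. There exists c_q > 0 such that for all A, B ∈ ℝ^d: G_q(B) − G_q(A) − (1 + |A|²)^{(q−2)/2} A · (B − A) ≥ c_q (1 + |A|² + |B|²)^{(q−2)/2} |A − B|². -/
/-! Put `p = (q - 2) / 2`, `s = ‖A‖²`, `t = ‖B‖²`. Since `2 ⟪A, B - A⟫ = t - s - ‖A - B‖²`, the
right-hand side equals `(D(1 + s, 1 + t) / (p + 1) + (1 + s) ^ p ‖A - B‖²) / 2`, where `D = powBregman p`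
is the Bregman divergence of `x ↦ x ^ (p + 1)`. If `1 + t ≤ 3 (1 + s)`, the second term alone suffices,
because `1 + s + t ≤ 4 (1 + s)`. Otherwise the midpoint `m` of `1 + s` and `1 + t` is at least
`2 (1 + s)`, so the derivative of `x ↦ x ^ (p + 1)` grows by a fixed factor `2 ^ p` between `1 + s`
and `m`; the three-point identity for Bregman divergences then gives `D(1 + s, 1 + t) ≳ m ^ (p + 1)`,
which dominates `m ^ p ‖A - B‖²` because `‖A - B‖² ≤ 2 (s + t)`. -/

open Real

noncomputable def powBregman (p a b : ℝ) : ℝ :=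
  b ^ (p + 1) - a ^ (p + 1) - (p + 1) * a ^ p * (b - a)

section powBregman

variable {p a b : ℝ}

theorem powBregman_nonneg (hp : 0 ≤ p) (ha : 0 < a) (hb : 0 ≤ b) : 0 ≤ powBregman p a b := by
  have hx : -1 ≤ b / a - 1 := by have := div_nonneg hb ha.le; linarith
  have bernoulli := one_add_mul_self_le_rpow_one_add hx (by linarith : 1 ≤ p + 1)
  rw [add_sub_cancel, div_rpow hb ha.le, le_div_iff₀ (by positivity), rpow_add_one ha.ne']
    at bernoulli
  have hexpand : (1 + (p + 1) * (b / a - 1)) * (a ^ p * a) =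
      a ^ p * a + (p + 1) * a ^ p * (b - a) := by
    field_simp
  rw [powBregman, rpow_add_one ha.ne']
  linarith

theorem powBregman_eq_add_add (u : ℝ) :
    powBregman p a b =
      powBregman p a u + powBregman p u b + (p + 1) * (u ^ p - a ^ p) * (b - u) := by
  simp only [powBregman]; ring

theorem mul_sub_rpow_mul_le_powBregman (hp : 0 ≤ p) (ha : 0 < a) {u : ℝ} (hau : a ≤ u)
    (hub : u ≤ b) : (p + 1) * (u ^ p - a ^ p) * (b - u) ≤ powBregman p a b := by
  rw [powBregman_eq_add_add u]
  have := powBregman_nonneg hp ha (ha.le.trans hau)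
  have := powBregman_nonneg hp (ha.trans_le hau) (ha.le.trans (hau.trans hub))
  linarith

theorem mul_rpow_le_powBregman_of_three_mul_le (hp : 0 ≤ p) (ha : 0 < a) (hab : 3 * a ≤ b) :
    (p + 1) * (1 - (1 / 2) ^ p) / 2 * ((a + b) / 2) ^ (p + 1) ≤ powBregman p a b := by
  set m := (a + b) / 2 with hm_def
  have hm : 0 < m := by linarith
  have ham : a ^ p ≤ (1 / 2) ^ p * m ^ p := by
    rw [← mul_rpow (by norm_num) hm.le]; exact rpow_le_rpow ha.le (by linarith) hp
  calc (p + 1) * (1 - (1 / 2) ^ p) / 2 * m ^ (p + 1)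
      = (p + 1) * (m ^ p - (1 / 2) ^ p * m ^ p) * (m / 2) := by
        rw [rpow_add_one hm.ne']; ring
    _ ≤ (p + 1) * (m ^ p - a ^ p) * (b - m) := by
      have : a ^ p ≤ m ^ p := rpow_le_rpow ha.le (by linarith) hp
      gcongr
      linarith
    _ ≤ powBregman p a b := mul_sub_rpow_mul_le_powBregman hp ha (by linarith) (by linarith)

theorem mul_rpow_add_mul_le_powBregman_div (hp : 0 ≤ p) (ha : 0 < a) (hab : 3 * a ≤ b)
    {D : ℝ} (hD : D ≤ 2 * (a + b)) :
    (1 - (1 / 2) ^ p) / 2 ^ (p + 3) * (a + b) ^ p * D ≤ powBregman p a b / (p + 1) := by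
  have hab0 : 0 < a + b := by linarith
  have hhalf : (1 / 2 : ℝ) ^ p ≤ 1 := rpow_le_one (by norm_num) (by norm_num) hp
  have hscale : (a + b) ^ p * (2 * (a + b)) = 2 ^ (p + 3) / 2 * ((a + b) / 2) ^ (p + 1) := by
    rw [div_rpow hab0.le zero_le_two, rpow_add_one hab0.ne', show p + 3 = p + 1 + 2 by ring,
      rpow_add two_pos, rpow_add_one two_ne_zero]
    field_simp; norm_num
  have hgain := mul_rpow_le_powBregman_of_three_mul_le hp ha hab
  calc (1 - (1 / 2) ^ p) / 2 ^ (p + 3) * (a + b) ^ p * D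
      ≤ (1 - (1 / 2) ^ p) / 2 ^ (p + 3) * (a + b) ^ p * (2 * (a + b)) := by
        gcongr
    _ = (1 - (1 / 2) ^ p) / 2 * ((a + b) / 2) ^ (p + 1) := by
      rw [mul_assoc, hscale]; field_simp
    _ ≤ powBregman p a b / (p + 1) := by rw [le_div_iff₀ (by linarith)]; linarith

theorem exists_pos_mul_rpow_add_mul_le (hp : 0 ≤ p) :
    ∃ c > 0, ∀ a b D : ℝ, 0 < a → 0 ≤ b → 0 ≤ D → D ≤ 2 * (a + b) →
      c * (a + b) ^ p * D ≤ powBregman p a b / (p + 1) + a ^ p * D := by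
  rcases hp.eq_or_lt with rfl | hp
  · exact ⟨1, one_pos, fun a b D ha _ _ _ => by simp [powBregman]⟩
  have hhalf : (1 / 2 : ℝ) ^ p < 1 := rpow_lt_one (by norm_num) (by norm_num) hp
  refine ⟨min (1 / 4 ^ p) ((1 - (1 / 2) ^ p) / 2 ^ (p + 3)),
    lt_min (by positivity) (div_pos (by linarith) (by positivity)), fun a b D ha hb hD hDab => ?_⟩
  have hbreg : 0 ≤ powBregman p a b / (p + 1) :=
    div_nonneg (powBregman_nonneg hp.le ha hb) (by linarith)
  rcases le_total b (3 * a) with hba | hab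
  · have hsum : (a + b) ^ p ≤ 4 ^ p * a ^ p := by
      rw [← mul_rpow (by norm_num) ha.le]; exact rpow_le_rpow (by positivity) (by linarith) hp.le
    calc min (1 / 4 ^ p) ((1 - (1 / 2) ^ p) / 2 ^ (p + 3)) * (a + b) ^ p * D
        ≤ 1 / 4 ^ p * (4 ^ p * a ^ p) * D := by gcongr; exact min_le_left _ _
      _ = a ^ p * D := by field_simp
      _ ≤ powBregman p a b / (p + 1) + a ^ p * D := by linarith
  · have hgain := mul_rpow_add_mul_le_powBregman_div hp.le ha hab hDab
    have : min (1 / 4 ^ p) ((1 - (1 / 2) ^ p) / 2 ^ (p + 3)) * (a + b) ^ p * D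
        ≤ (1 - (1 / 2) ^ p) / 2 ^ (p + 3) * (a + b) ^ p * D := by
      gcongr; exact min_le_right _ _
    nlinarith [mul_nonneg (rpow_nonneg ha.le p) hD]

end powBregman

/-- Uniform convexity estimate for `G_q(A) = (1/q)(1+|A|²)^{q/2}`:
`G_q(B) − G_q(A) − ∇G_q(A)·(B−A) ≥ c_q (1+|A|²+|B|²)^{(q−2)/2} |A−B|²`. -/
theorem Gq_uniform_convexity (d : ℕ) (q : ℝ) (hq : 2 ≤ q) :
    ∃ c : ℝ, 0 < c ∧ ∀ A B : EuclideanSpace ℝ (Fin d),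
      c * (1 + ‖A‖ ^ 2 + ‖B‖ ^ 2) ^ ((q - 2) / 2) * ‖A - B‖ ^ 2 ≤
        (1 / q) * (1 + ‖B‖ ^ 2) ^ (q / 2) - (1 / q) * (1 + ‖A‖ ^ 2) ^ (q / 2)
          - (1 + ‖A‖ ^ 2) ^ ((q - 2) / 2) * (inner ℝ A (B - A) : ℝ) := by
  obtain ⟨c, hc, hkey⟩ := exists_pos_mul_rpow_add_mul_le (p := (q - 2) / 2) (by linarith)
  refine ⟨c / 2, by positivity, fun A B => ?_⟩
  have hinner : inner ℝ A (B - A) = (‖B‖ ^ 2 - ‖A‖ ^ 2 - ‖A - B‖ ^ 2) / 2 := by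
    rw [inner_sub_right, real_inner_self_eq_norm_sq, norm_sub_sq_real]; ring
  have hDab : ‖A - B‖ ^ 2 ≤ 2 * ((1 + ‖A‖ ^ 2) + (1 + ‖B‖ ^ 2)) := by
    nlinarith [parallelogram_law_with_norm ℝ A B, norm_nonneg (A + B)]
  have h := hkey _ _ _ (by positivity) (by positivity) (by positivity) hDab
  rw [powBregman, show (q - 2) / 2 + 1 = q / 2 by ring] at h
  have hq0 : q ≠ 0 := by positivity
  rw [hinner]
  calc c / 2 * (1 + ‖A‖ ^ 2 + ‖B‖ ^ 2) ^ ((q - 2) / 2) * ‖A - B‖ ^ 2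
      ≤ c / 2 * (1 + ‖A‖ ^ 2 + (1 + ‖B‖ ^ 2)) ^ ((q - 2) / 2) * ‖A - B‖ ^ 2 := by
        gcongr; linarith
    _ ≤ _ := by
      field_simp at h ⊢
      linarith
end
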